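/- Let ω be a circle in ℝ² with center O and radius r > 0, let l be a line tangent to ω at a point T, and let X be a point on l with X ≠ T such that the second tangent line m from X to ω exists; let R be the point where m touches ω and let X' = 2R − X be the reflection of X across R (so X' lies on m with R the midpoint of X and X'). Then dist(O, X') = dist(O, X) and the oriented angle ∡ T O X' equals 3 times the oriented angle ∡ T O X (as angles modulo 2π). Consequently, in polar coordinates with pole O and axis along the ray from O through T, if X has azimuth φ then X' has polar coordinates (r·sec(φ), 3φ), i.e., X' lies on the Maclaurin trisectrix r = r·sec(θ/3). -/

import Mathlib

open MeasureTheory Real EuclideanGeometry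
open scoped RealInnerProductSpace

noncomputable section

instance : Fact (Module.finrank ℝ (EuclideanSpace ℝ (Fin 2)) = 2) :=
  ⟨finrank_euclideanSpace_fin⟩

instance : Module.Oriented ℝ (EuclideanSpace ℝ (Fin 2)) (Fin 2) :=
  ⟨(EuclideanSpace.basisFun (Fin 2) ℝ).toBasis.orientation⟩

/-!
Put the origin at `O` and write `u = T - O`, `v = R - O`, `x = X - O`. The tangency conditions say
`⟪x, u⟫ = ‖u‖²` and `⟪x, v⟫ = ‖v‖²`, so `X' - O = 2v - x` is the reflection of `x` in the line `ℝv`;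
in particular `‖X' - O‖ = ‖x‖`. The line `Ox` is the axis of symmetry of the two tangents, so
`∡(u, x) = ∡(x, v)`, and the reflection in `ℝv` gives `∡(v, 2v - x) = ∡(x, v)`. Adding the three
equal angles gives `∡(u, 2v - x) = 3 ∡(u, x)`, and `cos ∡(u, x) = ⟪u, x⟫ / (‖u‖‖x‖) = r / ‖x‖`.
-/

theorem ne_zero_of_ne_of_norm_eq {E : Type*} [NormedAddCommGroup E] {u v : E} (huv : u ≠ v)
    (hn : ‖u‖ = ‖v‖) : u ≠ 0 :=
  fun hu => huv (by rw [hu, eq_comm, ← norm_eq_zero, ← hn, hu, norm_zero])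

section InnerProductSpace

variable {V : Type*} [NormedAddCommGroup V] [InnerProductSpace ℝ V]

theorem inner_eq_norm_sq_of_inner_sub_eq_zero {x v : V} (h : ⟪x - v, v⟫ = 0) :
    ⟪x, v⟫ = ‖v‖ ^ 2 := by
  rwa [inner_sub_left, real_inner_self_eq_norm_sq, sub_eq_zero] at h

theorem ne_zero_of_inner_eq_norm_sq {x u : V} (hu : u ≠ 0) (h : ⟪x, u⟫ = ‖u‖ ^ 2) : x ≠ 0 := by
  rintro rfl
  rw [inner_zero_left, eq_comm, pow_eq_zero_iff two_ne_zero, norm_eq_zero] at h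
  exact hu h

theorem norm_two_smul_sub_eq_norm {x v : V} (h : ⟪x, v⟫ = ‖v‖ ^ 2) :
    ‖(2 : ℝ) • v - x‖ = ‖x‖ := by
  have hsq : ‖(2 : ℝ) • v - x‖ ^ 2 = ‖x‖ ^ 2 := by
    rw [norm_sub_sq_real, real_inner_smul_left, norm_smul, real_inner_comm, h, Real.norm_two]
    ring
  exact (pow_left_inj₀ (norm_nonneg _) (norm_nonneg _) two_ne_zero).mp hsq

end InnerProductSpace

namespace Orientation

variable {V : Type*} [NormedAddCommGroup V] [InnerProductSpace ℝ V]
  [Fact (Module.finrank ℝ V = 2)] (o : Orientation ℝ V (Fin 2))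

local notation "ω" => o.areaForm

theorem oangle_eq_of_inner_eq_of_areaForm_eq {a b c d : V} (hinner : ⟪a, b⟫ = ⟪c, d⟫)
    (harea : ω a b = ω c d) : o.oangle a b = o.oangle c d := by
  simp only [oangle, kahler_apply_apply, hinner, harea]

theorem areaForm_eq_zero_of_inner_eq_zero {a y z : V} (ha : a ≠ 0) (hy : ⟪a, y⟫ = 0)
    (hz : ⟪a, z⟫ = 0) : ω y z = 0 := by
  have h := o.inner_mul_areaForm_sub a y z
  rw [hy, hz, zero_mul, mul_zero, sub_zero, eq_comm] at h
  exact (mul_eq_zero.mp h).resolve_left (pow_ne_zero _ (norm_ne_zero_iff.mpr ha))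

theorem oangle_eq_oangle_of_norm_eq_of_inner_eq {u v x : V} (huv : u ≠ v) (hn : ‖u‖ = ‖v‖)
    (hi : ⟪u, x⟫ = ⟪v, x⟫) : o.oangle u x = o.oangle x v := by
  have hsum : ω (u + v) x = 0 := by
    refine o.areaForm_eq_zero_of_inner_eq_zero (sub_ne_zero.mpr huv) ?_ ?_
    · rw [inner_sub_left, inner_add_right, inner_add_right, real_inner_self_eq_norm_sq,
        real_inner_self_eq_norm_sq, real_inner_comm u v, hn]
      ring
    · rw [inner_sub_left, hi, sub_self]
  refine o.oangle_eq_of_inner_eq_of_areaForm_eq (by rw [hi, real_inner_comm]) ?_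
  rw [map_add, LinearMap.add_apply, add_eq_zero_iff_eq_neg] at hsum
  rw [hsum, o.areaForm_swap x v]

theorem oangle_two_smul_sub {v x : V} (h : ⟪x, v⟫ = ‖v‖ ^ 2) :
    o.oangle v ((2 : ℝ) • v - x) = o.oangle x v := by
  refine o.oangle_eq_of_inner_eq_of_areaForm_eq ?_ ?_
  · rw [inner_sub_right, real_inner_smul_right, real_inner_self_eq_norm_sq, real_inner_comm, h]
    ring
  · rw [map_sub, map_smul, o.areaForm_apply_self, smul_zero, zero_sub, o.areaForm_swap x v]

theorem oangle_two_smul_sub_eq_three_smul {u v x : V} (huv : u ≠ v) (hn : ‖u‖ = ‖v‖)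
    (hu : ⟪x, u⟫ = ‖u‖ ^ 2) (hv : ⟪x, v⟫ = ‖v‖ ^ 2) :
    o.oangle u ((2 : ℝ) • v - x) = (3 : ℤ) • o.oangle u x := by
  have hu0 : u ≠ 0 := ne_zero_of_ne_of_norm_eq huv hn
  have hv0 : v ≠ 0 := ne_zero_of_ne_of_norm_eq huv.symm hn.symm
  have hx0 : x ≠ 0 := ne_zero_of_inner_eq_norm_sq hu0 hu
  have hx'0 : (2 : ℝ) • v - x ≠ 0 := by
    rwa [← norm_ne_zero_iff, norm_two_smul_sub_eq_norm hv, norm_ne_zero_iff]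
  have hbisect : o.oangle u x = o.oangle x v :=
    o.oangle_eq_oangle_of_norm_eq_of_inner_eq huv hn (by rw [real_inner_comm, hu, hn,
      real_inner_comm, hv])
  rw [← o.oangle_add hu0 hv0 hx'0, ← o.oangle_add hu0 hx0 hv0, o.oangle_two_smul_sub hv,
    ← hbisect]
  abel

theorem norm_eq_div_cos_oangle {u x : V} (hu0 : u ≠ 0) (h : ⟪x, u⟫ = ‖u‖ ^ 2) :
    ‖x‖ = ‖u‖ / Real.cos (o.oangle u x).toReal := by
  have hx0 : x ≠ 0 := ne_zero_of_inner_eq_norm_sq hu0 h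
  have hu : ‖u‖ ≠ 0 := norm_ne_zero_iff.mpr hu0
  have hx : ‖x‖ ≠ 0 := norm_ne_zero_iff.mpr hx0
  rw [Real.Angle.cos_toReal, o.cos_oangle_eq_inner_div_norm_mul_norm hu0 hx0, real_inner_comm, h]
  field_simp

end Orientation

theorem maclaurin_trisectrix_characterisation_general
    (O T X R : EuclideanSpace ℝ (Fin 2)) (r : ℝ)
    (hT : dist O T = r)
    (hXl : ⟪X - T, T - O⟫ = 0)  -- `X` lies on the tangent line `l` to `ω` at `T`
    (hR : dist O R = r) (hRT : R ≠ T)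
    (hXm : ⟪X - R, R - O⟫ = 0)  -- the second tangent `m` from `X` touches `ω` at `R`
    (X' : EuclideanSpace ℝ (Fin 2)) (hX' : X' = (2 : ℝ) • R - X) :
    dist O X' = dist O X ∧
    ∡ T O X' = (3 : ℤ) • ∡ T O X ∧
    dist O X' = r / Real.cos (∡ T O X).toReal := by
  have hX'O : X' - O = (2 : ℝ) • (R - O) - (X - O) := by rw [hX']; module
  have hTO : T - O ≠ R - O := fun h => hRT (sub_left_injective h).symm
  have hn : ‖T - O‖ = ‖R - O‖ := by
    rw [← dist_eq_norm, ← dist_eq_norm, dist_comm, hT, dist_comm, hR]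
  have hu : ⟪X - O, T - O⟫ = ‖T - O‖ ^ 2 :=
    inner_eq_norm_sq_of_inner_sub_eq_zero (by rwa [sub_sub_sub_cancel_right])
  have hv : ⟪X - O, R - O⟫ = ‖R - O‖ ^ 2 :=
    inner_eq_norm_sq_of_inner_sub_eq_zero (by rwa [sub_sub_sub_cancel_right])
  have hdist : dist O X' = dist O X := by
    rw [dist_comm, dist_eq_norm, hX'O, norm_two_smul_sub_eq_norm hv, ← dist_eq_norm, dist_comm]
  refine ⟨hdist, ?_, ?_⟩
  · simp only [EuclideanGeometry.oangle, vsub_eq_sub, hX'O]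
    exact positiveOrientation.oangle_two_smul_sub_eq_three_smul hTO hn hu hv
  · rw [hdist, dist_comm, dist_eq_norm, ← hT, dist_comm, dist_eq_norm]
    exact positiveOrientation.norm_eq_div_cos_oangle (ne_zero_of_ne_of_norm_eq hTO hn) hu

/-- Characterisation of the Maclaurin trisectrix: let `ω` be the circle with centre `O` and
radius `r`, let `l` be the tangent line to `ω` at `T`, let `X ≠ T` be a point of `l`, let the
second tangent from `X` touch `ω` at `R`, and let `X'` be the reflection of `X` across `R`.
Then `|OX'| = |OX| = r·sec φ` and `∡ T O X' = 3φ`, where `φ = ∡ T O X`; that is, `X'` lies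
on the Maclaurin trisectrix with polar equation `r·sec (θ/3)` (pole `O`, axis the ray `OT`). -/
theorem maclaurin_trisectrix_characterisation
    (O T X R : EuclideanSpace ℝ (Fin 2)) (r : ℝ) (hr : 0 < r)
    (hT : dist O T = r)
    (hXl : ⟪X - T, T - O⟫ = 0)  -- `X` lies on the tangent line `l` to `ω` at `T`
    (hXT : X ≠ T)
    (hR : dist O R = r) (hRT : R ≠ T)
    (hXm : ⟪X - R, R - O⟫ = 0)  -- the second tangent `m` from `X` touches `ω` at `R`
    (X' : EuclideanSpace ℝ (Fin 2)) (hX' : X' = (2 : ℝ) • R - X) :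
    dist O X' = dist O X ∧
    ∡ T O X' = (3 : ℤ) • ∡ T O X ∧
    dist O X' = r / Real.cos (∡ T O X).toReal :=
  maclaurin_trisectrix_characterisation_general O T X R r hT hXl hR hRT hXm X' hX'

end
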